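/- arXiv:2602.09508 — 3 statements merged into one kernel-verified Lean document; each statement's English description precedes it below -/
import Mathlib

section
/- Let D = ad(Σ a_{α,i} L_{α,i}) + λ d be a derivation of 𝓑 (finitely many a_{α,i} nonzero), and suppose D(L_{β,j}) = 0 where j ≠ −β. Then a_{α,i} = 0 whenever (α−1)(j+1) ≠ (β−1)(i+1) and (α,i) ≠ (0,0), and a_{0,0} = (β/(β+j)) λ. -/
noncomputable section

abbrev B := (ℤ × ℕ) →₀ ℂ

/-- basis element `L α i` -/
def L (α : ℤ) (i : ℕ) : B := Finsupp.single (α, i) 1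

/-- structure constant `(α-1)(j+1) - (β-1)(i+1)` -/
def coef (p q : ℤ × ℕ) : ℂ :=
  ((p.1 - 1) * ((q.2 : ℤ) + 1) - (q.1 - 1) * ((p.2 : ℤ) + 1) : ℤ)

/-- the Block-type bracket, as a bilinear map -/
def br : B →ₗ[ℂ] B →ₗ[ℂ] B :=
  Finsupp.lsum ℂ fun p => LinearMap.toSpanSingleton ℂ _
    (Finsupp.lsum ℂ fun q => LinearMap.toSpanSingleton ℂ _
      (coef p q • L (p.1 + q.1) (p.2 + q.2)))

/-- the outer derivation `d`, with `d (L β j) = β • L β j` -/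
def dmap : B →ₗ[ℂ] B :=
  Finsupp.lsum ℂ fun p => LinearMap.toSpanSingleton ℂ _ ((p.1 : ℂ) • L p.1 p.2)

def IsDer (D : B →ₗ[ℂ] B) : Prop := ∀ x y, D (br x y) = br (D x) y + br x (D y)

def Is2Local (Δ : B → B) : Prop :=
  ∀ x y, ∃ D : B →ₗ[ℂ] B, IsDer D ∧ Δ x = D x ∧ Δ y = D y

/-! Evaluating `[a, L β j] + λ d(L β j) = 0` at the basis index `(α + β, i + j)` isolates the single
coefficient `a (α, i)`: the bracket contributes `a (α, i)` times the structure constant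
`(α - 1)(j + 1) - (β - 1)(i + 1)`, and the `d`-term contributes `λ β` exactly when `(α, i) = (0, 0)`.
Away from `(0, 0)` a nonzero structure constant forces `a (α, i) = 0`; at `(0, 0)` the structure
constant is `-(β + j)`, which gives `a (0, 0) = β λ / (β + j)`. -/

lemma coef_eq_zero_iff (α β : ℤ) (i j : ℕ) :
    coef (α, i) (β, j) = 0 ↔ (α - 1) * ((j : ℤ) + 1) = (β - 1) * ((i : ℤ) + 1) := by
  rw [coef, Int.cast_eq_zero, sub_eq_zero]

lemma coef_zero_left (β : ℤ) (j : ℕ) : coef 0 (β, j) = -((β : ℂ) + j) := by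
  simp only [coef, Prod.fst_zero, Prod.snd_zero]
  push_cast
  ring

lemma br_single_L (q : ℤ × ℕ) (c : ℂ) (β : ℤ) (j : ℕ) :
    br (Finsupp.single q c) (L β j) = Finsupp.single (q + (β, j)) (c * coef q (β, j)) := by
  simp only [br, L, Finsupp.lsum_single, LinearMap.smul_apply, LinearMap.toSpanSingleton_apply,
    Finsupp.smul_single, smul_eq_mul, one_mul, mul_one]
  rw [mul_comm]
  rfl

lemma br_L_apply_add (a : B) (p : ℤ × ℕ) (β : ℤ) (j : ℕ) :
    br a (L β j) (p + (β, j)) = a p * coef p (β, j) := by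
  induction a using Finsupp.induction_linear with
  | zero => simp
  | add f g hf hg => simp only [map_add, LinearMap.add_apply, Finsupp.add_apply, hf, hg, add_mul]
  | single q c => by_cases hq : q = p <;> simp [br_single_L, hq]

lemma dmap_L_apply_add (p : ℤ × ℕ) (β : ℤ) (j : ℕ) :
    dmap (L β j) (p + (β, j)) = if p = 0 then (β : ℂ) else 0 := by
  obtain ⟨α, i⟩ := p
  simp [dmap, L, Finsupp.single_apply, Prod.ext_iff, eq_comm (a := β)]

lemma coef_mul_add_eq_zero_of_br_add_smul_dmap_eq_zero {β : ℤ} {j : ℕ} {a : B} {lam : ℂ}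
    (h : br a (L β j) + lam • dmap (L β j) = 0) (p : ℤ × ℕ) :
    a p * coef p (β, j) + (if p = 0 then lam * β else 0) = 0 := by
  have hp := DFunLike.congr_fun h (p + (β, j))
  rwa [Finsupp.add_apply, Finsupp.smul_apply, br_L_apply_add, dmap_L_apply_add, smul_eq_mul,
    mul_ite, mul_zero] at hp

theorem vanishing_der_structure (β : ℤ) (j : ℕ) (hβj : β + (j : ℤ) ≠ 0)
    (a : B) (lam : ℂ)
    (h : br a (L β j) + lam • dmap (L β j) = 0) :
    (∀ (α : ℤ) (i : ℕ), (α - 1) * ((j : ℤ) + 1) ≠ (β - 1) * ((i : ℤ) + 1) →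
      (α, i) ≠ ((0 : ℤ), (0 : ℕ)) → a (α, i) = 0) ∧
    a (0, 0) = (β : ℂ) / ((β : ℂ) + (j : ℂ)) * lam := by
  have hcoeff := coef_mul_add_eq_zero_of_br_add_smul_dmap_eq_zero h
  constructor
  · intro α i hne hne₀
    have hα := hcoeff (α, i)
    rw [Prod.mk_zero_zero] at hne₀
    rw [if_neg hne₀, add_zero] at hα
    exact (mul_eq_zero.mp hα).resolve_right ((coef_eq_zero_iff α β i j).not.mpr hne)
  · have h₀ := hcoeff 0
    rw [if_pos rfl, coef_zero_left] at h₀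
    have hβj' : (β : ℂ) + j ≠ 0 := by exact_mod_cast hβj
    rw [Prod.mk_zero_zero, div_mul_eq_mul_div, eq_div_iff hβj']
    linear_combination -h₀

end
end

section
/- Let Δ be a 2-local derivation on 𝓑 with Δ(L_{0,0}) = Δ(L_{1,0}) = 0. Then for every x = Σ μ_{γ,k} L_{γ,k} ∈ 𝓑 there exists ξ_x ∈ ℂ such that Δ(x) = ξ_x · Σ k μ_{γ,k} L_{γ,k}. -/
noncomputable section

/-!
Testing Δ against the pairs (L_{β,0}, L_{0,0}) and (L_{β,0}, L_{1,0}) shows that Δ kills every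
L_{β,0}. Given x, pick β far beyond the first indices occurring in x and Δ x, and a derivation
ad a + λ d agreeing with Δ on x and on L_{β,0}. Since it kills L_{β,0}, λ = a_{0,0} and every other
component a_q sits at q.1 ≥ β. So [a - a_{0,0} L_{0,0}, x] lives far from x and Δ x, and there
Δ x = a_{0,0} ([L_{0,0}, x] + d x), where ad L_{0,0} + d multiplies L_{γ,k} by -k.
-/

lemma single_eq_smul_L (p : ℤ × ℕ) (c : ℂ) : Finsupp.single p c = c • L p.1 p.2 := by
  simp [L]

lemma br_L_L (α β : ℤ) (i j : ℕ) :
    br (L α i) (L β j) = coef (α, i) (β, j) • L (α + β) (i + j) := by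
  simp [br, L]

lemma coef_zero_zero_left (p : ℤ × ℕ) : coef (0, 0) p = -(p.1 + p.2) := by
  simp [coef]; ring

lemma coef_zero_right (q : ℤ × ℕ) (β : ℤ) :
    coef q (β, 0) = (q.1 - 1) - (β - 1) * (q.2 + 1) := by
  simp [coef]

lemma dmap_apply (x : B) (p : ℤ × ℕ) : dmap x p = p.1 * x p := by
  induction x using Finsupp.induction_linear with
  | zero => simp
  | add f g hf hg => simp [hf, hg, mul_add]
  | single q c =>
    simp only [dmap, Finsupp.lsum_single, LinearMap.toSpanSingleton_apply, L,
      Finsupp.smul_apply, Finsupp.single_apply]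
    split_ifs with h
    · subst h; simp [mul_comm]
    · simp

lemma br_L_zero_apply_add (a : B) (β : ℤ) (q : ℤ × ℕ) :
    br a (L β 0) (q + (β, 0)) = a q * coef q (β, 0) := by
  induction a using Finsupp.induction_linear with
  | zero => simp
  | add f g hf hg => simp [hf, hg, add_mul]
  | single p c =>
    rw [single_eq_smul_L, map_smul, LinearMap.smul_apply, br_L_L]
    simp only [L, Finsupp.smul_apply, Finsupp.single_apply, Prod.ext_iff, Prod.fst_add,
      Prod.snd_add]
    split_ifs <;> simp_all

lemma br_L_zero_zero_apply (x : B) (p : ℤ × ℕ) : br (L 0 0) x p = -(p.1 + p.2) * x p := by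
  induction x using Finsupp.induction_linear with
  | zero => simp
  | add f g hf hg => simp [hf, hg, mul_add]
  | single q c =>
    rw [single_eq_smul_L, map_smul, br_L_L, coef_zero_zero_left]
    simp only [L, zero_add, Finsupp.smul_apply, Finsupp.single_apply, smul_eq_mul]
    split_ifs with h
    · subst h; ring
    · simp

lemma br_L_zero_zero_add_dmap_apply (x : B) (p : ℤ × ℕ) :
    (br (L 0 0) x + dmap x) p = -(p.2 * x p) := by
  rw [Finsupp.add_apply, br_L_zero_zero_apply, dmap_apply]; ring

lemma br_apply_eq_zero {a x : B} {p : ℤ × ℕ}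
    (h : ∀ q ∈ a.support, ∀ r ∈ x.support, q + r ≠ p) : br a x p = 0 := by
  simp only [br, Finsupp.lsum_apply, Finsupp.sum, LinearMap.sum_apply,
    LinearMap.toSpanSingleton_apply, LinearMap.smul_apply, Finsupp.finsetSum_apply,
    Finsupp.smul_apply]
  refine Finset.sum_eq_zero fun q hq => ?_
  rw [Finset.sum_eq_zero fun r hr => ?_, smul_zero]
  have := h q hq r hr
  simp_all [L]

def stdDer (a : B) (lam : ℂ) : B →ₗ[ℂ] B := br a + lam • dmap

lemma stdDer_apply (a : B) (lam : ℂ) (x : B) : stdDer a lam x = br a x + lam • dmap x := rfl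

lemma stdDer_L_zero_apply_add_of_ne (a : B) (lam : ℂ) (β : ℤ) {q : ℤ × ℕ} (hq : q ≠ 0) :
    stdDer a lam (L β 0) (q + (β, 0)) = a q * coef q (β, 0) := by
  have : L β 0 (q + (β, 0)) = 0 := by simp [L, hq]
  simp [stdDer_apply, br_L_zero_apply_add, dmap_apply, this]

lemma stdDer_L_zero_apply_self (a : B) (lam : ℂ) (β : ℤ) :
    stdDer a lam (L β 0) (β, 0) = β * (lam - a 0) := by
  have := br_L_zero_apply_add a β 0
  rw [zero_add] at this
  rw [stdDer_apply, Finsupp.add_apply, this, ← Prod.mk_zero_zero, coef_zero_zero_left]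
  simp [dmap_apply, L]
  ring

lemma stdDer_self_apply (a x : B) :
    stdDer a (a 0) x = br (a.erase 0) x + a 0 • (br (L 0 0) x + dmap x) := by
  have ha : a.erase 0 + a 0 • L 0 0 = a := by
    rw [L, Prod.mk_zero_zero, Finsupp.smul_single_one, Finsupp.erase_add_single]
  rw [stdDer_apply]
  nth_rw 1 [← ha]
  rw [map_add, map_smul, LinearMap.add_apply, LinearMap.smul_apply, smul_add, add_assoc]

lemma eq_of_stdDer_L_zero_eq_zero {a : B} {lam : ℂ} {β : ℤ} (hβ : β ≠ 0)
    (h : stdDer a lam (L β 0) = 0) : lam = a 0 := by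
  have := congr($h (β, 0))
  rw [stdDer_L_zero_apply_self] at this
  simpa [hβ, sub_eq_zero] using this

lemma le_fst_of_stdDer_L_zero_eq_zero {a : B} {lam : ℂ} {β : ℤ} (hβ : 0 < β)
    (h : stdDer a lam (L β 0) = 0) {q : ℤ × ℕ} (hq : q ≠ 0) (ha : a q ≠ 0) : β ≤ q.1 := by
  have := congr($h (q + (β, 0)))
  rw [stdDer_L_zero_apply_add_of_ne _ _ _ hq, Finsupp.zero_apply, mul_eq_zero,
    coef_zero_right] at this
  have hcoef : q.1 - 1 = (β - 1) * (q.2 + 1) := by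
    exact_mod_cast sub_eq_zero.mp (this.resolve_left ha)
  nlinarith

def IsStd2Local (Δ : B → B) : Prop :=
  ∀ x y, ∃ (a : B) (lam : ℂ), Δ x = stdDer a lam x ∧ Δ y = stdDer a lam y

lemma Is2Local.isStd2Local {Δ : B → B} (hΔ : Is2Local Δ)
    (hDer : ∀ D : B →ₗ[ℂ] B, IsDer D →
      ∃ (a : B) (lam : ℂ), ∀ x : B, D x = br a x + lam • dmap x) :
    IsStd2Local Δ := by
  intro x y
  obtain ⟨D, hD, hx, hy⟩ := hΔ x y
  obtain ⟨a, lam, hDa⟩ := hDer D hD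
  exact ⟨a, lam, hx.trans (hDa x), hy.trans (hDa y)⟩

lemma IsStd2Local.apply_L_zero_eq_zero {Δ : B → B} (hΔ : IsStd2Local Δ)
    (h0 : Δ (L 0 0) = 0) (h1 : Δ (L 1 0) = 0) (β : ℤ) : Δ (L β 0) = 0 := by
  obtain ⟨a₀, l₀, hβ₀, h₀⟩ := hΔ (L β 0) (L 0 0)
  obtain ⟨a₁, l₁, hβ₁, h₁⟩ := hΔ (L β 0) (L 1 0)
  rw [h₀] at h0
  rw [h₁] at h1
  ext u
  obtain ⟨q, rfl⟩ : ∃ q, u = q + (β, 0) := ⟨(u.1 - β, u.2), by ext <;> simp⟩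
  rw [Finsupp.zero_apply]
  rcases eq_or_ne q 0 with rfl | hq
  · rw [hβ₁, zero_add, stdDer_L_zero_apply_self, eq_of_stdDer_L_zero_eq_zero one_ne_zero h1,
      sub_self, mul_zero]
  -- `coef q (0, 0) = q.1 + q.2` and `coef q (1, 0) = q.1 - 1` cannot both vanish.
  rcases eq_or_ne q.1 1 with hq1 | hq1
  · have h0q := congr($h0 (q + (0, 0)))
    rw [stdDer_L_zero_apply_add_of_ne _ _ _ hq, coef_zero_right, Finsupp.zero_apply] at h0q
    have : a₀ q = 0 := by
      refine (mul_eq_zero.mp h0q).resolve_right ?_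
      rw [hq1]
      norm_num
      exact Nat.cast_add_one_ne_zero q.2
    rw [hβ₀, stdDer_L_zero_apply_add_of_ne _ _ _ hq, this, zero_mul]
  · have h1q := congr($h1 (q + (1, 0)))
    rw [stdDer_L_zero_apply_add_of_ne _ _ _ hq, coef_zero_right, Finsupp.zero_apply] at h1q
    have : a₁ q = 0 := by
      refine (mul_eq_zero.mp h1q).resolve_right ?_
      push_cast
      simpa [sub_eq_zero] using hq1
    rw [hβ₁, stdDer_L_zero_apply_add_of_ne _ _ _ hq, this, zero_mul]

theorem two_local_general_form (Δ : B → B) (hΔ : Is2Local Δ)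
    (hDer : ∀ D : B →ₗ[ℂ] B, IsDer D →
      ∃ (a : B) (lam : ℂ), ∀ x : B, D x = br a x + lam • dmap x)
    (h0 : Δ (L 0 0) = 0) (h1 : Δ (L 1 0) = 0) :
    ∀ x : B, ∃ ξ : ℂ, ∀ p : ℤ × ℕ, (Δ x) p = ξ * (p.2 : ℂ) * x p := by
  intro x
  set S := x.support ∪ (Δ x).support
  obtain ⟨N, hN⟩ : ∃ N : ℕ, ∀ p ∈ S, p.1.natAbs ≤ N :=
    ⟨_, fun p hp => Finset.le_sup (f := fun p : ℤ × ℕ => p.1.natAbs) hp⟩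
  have hΔ' := hΔ.isStd2Local hDer
  obtain ⟨a, lam, hx, hβ⟩ := hΔ' x (L (2 * N + 1) 0)
  have hβ0 : stdDer a lam (L (2 * N + 1) 0) = 0 := hβ ▸ hΔ'.apply_L_zero_eq_zero h0 h1 _
  obtain rfl := eq_of_stdDer_L_zero_eq_zero (by omega) hβ0
  refine ⟨-a 0, fun p => ?_⟩
  by_cases hp : p ∈ S
  · rw [hx, stdDer_self_apply, Finsupp.add_apply, br_apply_eq_zero, Finsupp.smul_apply,
      br_L_zero_zero_add_dmap_apply, smul_eq_mul]
    · ring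
    intro q hq r hr hqr
    rw [Finsupp.support_erase, Finset.mem_erase, Finsupp.mem_support_iff] at hq
    have hq₁ := le_fst_of_stdDer_L_zero_eq_zero (by omega) hβ0 hq.1 hq.2
    have hr₁ := hN r (Finset.mem_union_left _ hr)
    have hp₁ := hN p hp
    rw [← hqr, Prod.fst_add] at hp₁
    omega
  · simp only [S, Finset.mem_union, Finsupp.mem_support_iff, not_or, not_not] at hp
    rw [hp.1, hp.2, mul_zero]

end
end

section
/- Let Δ be a 2-local derivation on 𝓑 with Δ(L_{0,0}) = Δ(L_{1,0}) = Δ(L_{−1,1}) = 0. Then for every p ∈ ℕ (p ≥ 1), Δ(L_{p,0} + L_{−2p,2p}) = 0. -/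
/-!
Grade `𝓑` by the weight `α + i` of `L α i`. A derivation `ad a + λ d` killing `L (-1) 1` has
`λ = 0` and `a` of weight `0`; it preserves weights and kills the weight-zero element
`L (-2p) (2p)` (the weight-zero part is abelian), so `Δ x` lives in weight `p` for
`x = L p 0 + L (-2p) (2p)`. A derivation killing `L γ 0` with `γ ≠ 0` has `λ = a (0,0)`, and all
other coefficients of `a` sit in weights `γ (i + 1)`; so it has no weight-`β` component on
`L β 0`, and on `L β j` it only shifts weights by multiples of `γ`. Pairing with `L 1 0` gives
`Δ (L β 0) = 0` for every `β`, and pairing `x` with `L (p + 1) 0` then kills the weight-`p`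
part, since `p + 1 ∤ p`.
-/

noncomputable section

def der (a : B) (lam : ℂ) : B →ₗ[ℂ] B := br a + lam • dmap

lemma br_L (a : B) (β : ℤ) (j : ℕ) :
    br a (L β j) = a.sum fun p c => Finsupp.single (p.1 + β, p.2 + j) (c * coef p (β, j)) := by
  simp [br, L, Finsupp.lsum_apply, LinearMap.finsupp_sum_apply, Finsupp.smul_single]

lemma dmap_L (β : ℤ) (j : ℕ) : dmap (L β j) = (β : ℂ) • L β j := by
  simp [dmap, L]

lemma der_L_apply (a : B) (lam : ℂ) (β : ℤ) (j : ℕ) (k : ℤ × ℕ) :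
    der a lam (L β j) k =
      (a.sum fun p c => if (p.1 + β, p.2 + j) = k then c * coef p (β, j) else 0)
        + if (β, j) = k then lam * β else 0 := by
  rw [der, LinearMap.add_apply, LinearMap.smul_apply, br_L, dmap_L]
  simp only [Finsupp.add_apply, Finsupp.sum_apply, Finsupp.single_apply, Finsupp.smul_apply, L,
    smul_eq_mul]
  split_ifs <;> ring

lemma der_L_apply_add (a : B) (lam : ℂ) (β m : ℤ) (j i : ℕ) :
    der a lam (L β j) (m + β, i + j) =
      a (m, i) * coef (m, i) (β, j) + if (m, i) = (0, 0) then lam * β else 0 := by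
  have hshift : ∀ p : ℤ × ℕ, (p.1 + β, p.2 + j) = (m + β, i + j) ↔ (m, i) = p := by
    intro p; simp [Prod.ext_iff, eq_comm]
  simp +contextual [der_L_apply, hshift]

lemma der_L_apply_of_lt (a : B) (lam : ℂ) (β : ℤ) {j : ℕ} {k : ℤ × ℕ} (hk : k.2 < j) :
    der a lam (L β j) k = 0 := by
  have hne : ∀ p : ℤ × ℕ, (p.1 + β, p.2 + j) ≠ k := fun p h => by rw [← h] at hk; simp at hk
  have hne' : (β, j) ≠ k := by simpa using hne 0
  simp [der_L_apply, hne, hne']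

lemma der_L_apply_eq_zero_of_forall {a : B} {lam : ℂ} {β : ℤ} {j : ℕ} {k : ℤ × ℕ}
    (h : ∀ (m : ℤ) (i : ℕ), (m + β, i + j) = k →
      a (m, i) * coef (m, i) (β, j) + (if (m, i) = (0, 0) then lam * β else 0) = 0) :
    der a lam (L β j) k = 0 := by
  rcases lt_or_ge k.2 j with hk | hk
  · exact der_L_apply_of_lt a lam β hk
  · have hkeq : (k.1 - β + β, k.2 - j + j) = k := by ext <;> simp; omega
    rw [← hkeq, der_L_apply_add]
    exact h _ _ hkeq

lemma mul_coef_add_eq_zero_of_der_L_eq_zero {a : B} {lam : ℂ} {β : ℤ} {j : ℕ}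
    (h : der a lam (L β j) = 0) (m : ℤ) (i : ℕ) :
    a (m, i) * coef (m, i) (β, j) + (if (m, i) = (0, 0) then lam * β else 0) = 0 := by
  rw [← der_L_apply_add, h, Finsupp.coe_zero, Pi.zero_apply]

lemma coef_of_add_eq_zero {m : ℤ} {i : ℕ} (h : m + i = 0) (β : ℤ) (j : ℕ) :
    coef (m, i) (β, j) = ((m - 1) * (β + j) : ℤ) := by
  rw [coef]; congr 1
  rw [show (i : ℤ) = -m by omega]; ring

lemma coef_L_zero (m : ℤ) (i : ℕ) (γ : ℤ) :
    coef (m, i) (γ, 0) = (m + i - γ * (i + 1) : ℤ) := by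
  rw [coef]; push_cast; ring

lemma weight_zero_of_der_L_neg_one_one_eq_zero {a : B} {lam : ℂ}
    (h : der a lam (L (-1) 1) = 0) : lam = 0 ∧ ∀ k : ℤ × ℕ, k.1 + k.2 ≠ 0 → a k = 0 := by
  have hrel := mul_coef_add_eq_zero_of_der_L_eq_zero h
  have hcoef : ∀ (m : ℤ) (i : ℕ), coef (m, i) (-1, 1) = 2 * (m + i : ℤ) := by
    intro m i; rw [coef]; push_cast; ring
  refine ⟨by simpa [hcoef] using hrel 0 0, fun ⟨m, i⟩ hk => ?_⟩
  have hmi : ((m, i) : ℤ × ℕ) ≠ (0, 0) := by rintro ⟨⟩; simp at hk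
  have := hrel m i
  rw [if_neg hmi, add_zero, hcoef] at this
  exact (mul_eq_zero.mp this).resolve_right (by exact_mod_cast by simpa using hk)

lemma der_L_apply_eq_zero_of_weight_ne {a : B} (ha : ∀ k : ℤ × ℕ, k.1 + k.2 ≠ 0 → a k = 0)
    {β : ℤ} {j : ℕ} {k : ℤ × ℕ} (hk : k.1 + k.2 ≠ β + j) : der a 0 (L β j) k = 0 := by
  refine der_L_apply_eq_zero_of_forall fun m i hmi => ?_
  subst hmi
  rw [ha (m, i) (by push_cast at hk ⊢; omega)]
  simp

lemma der_L_eq_zero_of_weight_eq_zero {a : B} (ha : ∀ k : ℤ × ℕ, k.1 + k.2 ≠ 0 → a k = 0)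
    {β : ℤ} {j : ℕ} (h : β + j = 0) : der a 0 (L β j) = 0 := by
  ext k
  refine der_L_apply_eq_zero_of_forall fun m i _ => ?_
  by_cases hmi : m + i = 0
  · simp [coef_of_add_eq_zero hmi, h]
  · simp [ha (m, i) hmi]

lemma der_L_zero_apply_eq_zero_of_weight_eq {a : B} {lam : ℂ} {γ : ℤ} (hγ : γ ≠ 0)
    (h : der a lam (L γ 0) = 0) {β : ℤ} {k : ℤ × ℕ} (hk : k.1 + k.2 = β) :
    der a lam (L β 0) k = 0 := by
  have hrel := mul_coef_add_eq_zero_of_der_L_eq_zero h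
  have hlam : lam = a (0, 0) := by
    have := hrel 0 0
    rw [coef_L_zero, if_pos rfl] at this
    push_cast at this
    exact mul_left_cancel₀ (Int.cast_ne_zero.mpr hγ) (by linear_combination this)
  refine der_L_apply_eq_zero_of_forall fun m i hmi => ?_
  subst hmi
  have hw : m + i = 0 := by push_cast at hk; omega
  by_cases h0 : ((m, i) : ℤ × ℕ) = (0, 0)
  · obtain ⟨rfl, rfl⟩ := Prod.mk.inj h0
    simp [coef_L_zero, hlam]
  · have := hrel m i
    rw [if_neg h0, add_zero, coef_L_zero, hw, zero_sub] at this
    have hne : ((-(γ * (i + 1)) : ℤ) : ℂ) ≠ 0 := by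
      exact_mod_cast neg_ne_zero.mpr (mul_ne_zero hγ (by omega))
    simp [(mul_eq_zero.mp this).resolve_right hne, h0]

lemma der_L_apply_eq_zero_of_not_dvd {a : B} {lam : ℂ} {γ : ℤ} (h : der a lam (L γ 0) = 0)
    {β : ℤ} {j : ℕ} {k : ℤ × ℕ} (hk : ¬γ ∣ k.1 + k.2 - (β + j)) : der a lam (L β j) k = 0 := by
  refine der_L_apply_eq_zero_of_forall fun m i hmi => ?_
  subst hmi
  have hw : (m + β, i + j).1 + ((m + β, i + j).2 : ℤ) - (β + j) = m + i := by push_cast; ring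
  rw [hw] at hk
  have h0 : ((m, i) : ℤ × ℕ) ≠ (0, 0) := by
    rintro ⟨⟩
    exact hk (dvd_zero γ)
  have := mul_coef_add_eq_zero_of_der_L_eq_zero h m i
  rw [if_neg h0, add_zero, coef_L_zero] at this
  have hne : ((m + i - γ * (i + 1) : ℤ) : ℂ) ≠ 0 := by
    refine Int.cast_ne_zero.mpr fun heq => hk ⟨i + 1, by linarith⟩
  simp [(mul_eq_zero.mp this).resolve_right hne, h0]

lemma Is2Local.exists_der_of_apply_eq_zero {Δ : B → B} (hΔ : Is2Local Δ)
    (hDer : ∀ D : B →ₗ[ℂ] B, IsDer D →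
      ∃ (a : B) (lam : ℂ), ∀ x : B, D x = br a x + lam • dmap x)
    {y : B} (hy : Δ y = 0) (x : B) : ∃ (a : B) (lam : ℂ), der a lam y = 0 ∧ Δ x = der a lam x := by
  obtain ⟨D, hD, hx, hy'⟩ := hΔ x y
  obtain ⟨a, lam, hDa⟩ := hDer D hD
  refine ⟨a, lam, ?_, ?_⟩ <;>
    simp only [der, LinearMap.add_apply, LinearMap.smul_apply, ← hDa, ← hx, ← hy', hy]

lemma Is2Local.apply_L_zero_eq_zero {Δ : B → B} (hΔ : Is2Local Δ)
    (hDer : ∀ D : B →ₗ[ℂ] B, IsDer D →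
      ∃ (a : B) (lam : ℂ), ∀ x : B, D x = br a x + lam • dmap x)
    (h1 : Δ (L 1 0) = 0) (h2 : Δ (L (-1) 1) = 0) (β : ℤ) : Δ (L β 0) = 0 := by
  ext k
  by_cases hk : k.1 + k.2 = β
  · obtain ⟨a, lam, ha, hx⟩ := hΔ.exists_der_of_apply_eq_zero hDer h1 (L β 0)
    rw [hx]
    exact der_L_zero_apply_eq_zero_of_weight_eq one_ne_zero ha hk
  · obtain ⟨a, lam, hker, hx⟩ := hΔ.exists_der_of_apply_eq_zero hDer h2 (L β 0)
    obtain ⟨rfl, ha⟩ := weight_zero_of_der_L_neg_one_one_eq_zero hker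
    rw [hx]
    exact der_L_apply_eq_zero_of_weight_ne ha (by simpa using hk)

theorem two_local_vanishes_on_special_sum_general (Δ : B → B) (hΔ : Is2Local Δ)
    (hDer : ∀ D : B →ₗ[ℂ] B, IsDer D →
      ∃ (a : B) (lam : ℂ), ∀ x : B, D x = br a x + lam • dmap x)
    (h1 : Δ (L 1 0) = 0) (h2 : Δ (L (-1) 1) = 0) :
    ∀ p : ℕ, 1 ≤ p → Δ (L (p : ℤ) 0 + L (-(2 * p : ℤ)) (2 * p)) = 0 := by
  intro p hp
  ext k
  by_cases hk : k.1 + k.2 = p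
  · obtain ⟨a, lam, ha, hx⟩ := hΔ.exists_der_of_apply_eq_zero hDer
      (hΔ.apply_L_zero_eq_zero hDer h1 h2 (p + 1)) (L (p : ℤ) 0 + L (-(2 * p : ℤ)) (2 * p))
    have hndvd : ¬((p : ℤ) + 1) ∣ k.1 + k.2 - (-(2 * p : ℤ) + (2 * p : ℕ)) := by
      push_cast
      intro hdvd
      have := Int.le_of_dvd (by omega) hdvd
      omega
    rw [hx, map_add, Finsupp.add_apply, der_L_zero_apply_eq_zero_of_weight_eq (by omega) ha hk,
      der_L_apply_eq_zero_of_not_dvd ha hndvd, add_zero, Finsupp.coe_zero, Pi.zero_apply]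
  · obtain ⟨a, lam, hker, hx⟩ := hΔ.exists_der_of_apply_eq_zero hDer h2
      (L (p : ℤ) 0 + L (-(2 * p : ℤ)) (2 * p))
    obtain ⟨rfl, ha⟩ := weight_zero_of_der_L_neg_one_one_eq_zero hker
    rw [hx, map_add, der_L_eq_zero_of_weight_eq_zero (β := -(2 * p : ℤ)) (j := 2 * p) ha
      (by push_cast; ring), add_zero]
    exact der_L_apply_eq_zero_of_weight_ne ha (by simpa using hk)

theorem two_local_vanishes_on_special_sum (Δ : B → B) (hΔ : Is2Local Δ)
    (hDer : ∀ D : B →ₗ[ℂ] B, IsDer D →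
      ∃ (a : B) (lam : ℂ), ∀ x : B, D x = br a x + lam • dmap x)
    (h0 : Δ (L 0 0) = 0) (h1 : Δ (L 1 0) = 0) (h2 : Δ (L (-1) 1) = 0) :
    ∀ p : ℕ, 1 ≤ p → Δ (L (p : ℤ) 0 + L (-(2 * p : ℤ)) (2 * p)) = 0 :=
  two_local_vanishes_on_special_sum_general Δ hΔ hDer h1 h2

end
end
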